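/- arXiv:2408.06127 — 2 statements merged into one kernel-verified Lean document; each statement's English description precedes it below -/
import Mathlib

section
/- Let H = ℓ²(ℕ, ℂ) with standard orthonormal basis (δ_n)_{n∈ℕ}, let e_{ij} ∈ B(H) be the rank-one operator e_{ij}(ξ) = ⟨ξ, δ_j⟩·δ_i, and let E be the norm closure of Span_ℂ{e_{ij} : (i,j) ≠ (0,0)}. If T ∈ E and 0 ≤ T in B(H), then T δ₀ = 0 (equivalently, ⟨T δ₀, δ_n⟩ = 0 for all n ∈ ℕ). -/
/-!
Statement 5: If `T` lies in the closed span `E` of the matrix units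
`{e_{ij} : (i,j) ≠ (0,0)}` in `B(ℓ²(ℕ))` and `T` is a positive operator, then
`T δ₀ = 0`.
-/

open scoped ComplexOrder

set_option synthInstance.maxHeartbeats 1000000
set_option maxHeartbeats 2000000
noncomputable section

/-- The Hilbert space `ℓ²(ℕ, ℂ)`. -/
abbrev ellTwo : Type := lp (fun _ : ℕ => ℂ) 2

/-- The standard orthonormal basis of `ℓ²(ℕ, ℂ)`. -/
def deltaBasis (n : ℕ) : ellTwo := lp.single 2 n 1

/-- The matrix unit `e_{ij} : ξ ↦ ⟨ξ, δ_j⟩ δ_i` on `ℓ²(ℕ, ℂ)`. -/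
def matrixUnit (i j : ℕ) : ellTwo →L[ℂ] ellTwo :=
  (ContinuousLinearMap.toSpanSingleton ℂ (deltaBasis i)).comp
    ((innerSL ℂ) (deltaBasis j))

lemma inner_deltaBasis (i j : ℕ) :
    (inner ℂ (deltaBasis i) (deltaBasis j) : ℂ) = if i = j then 1 else 0 := by
  simp only [deltaBasis, lp.inner_single_left, lp.single_apply]
  by_cases h : i = j <;> simp [h, Pi.single_apply]

theorem stmt5 (T : ellTwo →L[ℂ] ellTwo)
    (hT : T ∈ closure (↑(Submodule.span ℂ
      {S : ellTwo →L[ℂ] ellTwo | ∃ i j : ℕ, (i, j) ≠ (0, 0) ∧ S = matrixUnit i j}) :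
        Set (ellTwo →L[ℂ] ellTwo)))
    (hpos : ∀ v : ellTwo, 0 ≤ (inner ℂ (T v) v : ℂ)) :
    T (deltaBasis 0) = 0 := by
  -- Step 1: the (0,0) matrix entry of `T` vanishes.
  have hC : IsClosed {S : ellTwo →L[ℂ] ellTwo |
      (inner ℂ (S (deltaBasis 0)) (deltaBasis 0) : ℂ) = 0} := by
    apply isClosed_eq _ continuous_const
    exact Continuous.inner
      ((ContinuousLinearMap.apply ℂ ellTwo (deltaBasis 0)).continuous) continuous_const
  have hspan : (↑(Submodule.span ℂ
      {S : ellTwo →L[ℂ] ellTwo | ∃ i j : ℕ, (i, j) ≠ (0, 0) ∧ S = matrixUnit i j}) :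
      Set (ellTwo →L[ℂ] ellTwo)) ⊆
      {S : ellTwo →L[ℂ] ellTwo | (inner ℂ (S (deltaBasis 0)) (deltaBasis 0) : ℂ) = 0} := by
    intro S hS
    induction hS using Submodule.span_induction with
    | mem S hS =>
      obtain ⟨i, j, hij, rfl⟩ := hS
      have : matrixUnit i j (deltaBasis 0)
          = (inner ℂ (deltaBasis j) (deltaBasis 0) : ℂ) • deltaBasis i := rfl
      simp only [Set.mem_setOf_eq, this, inner_smul_left, inner_deltaBasis]
      rcases eq_or_ne j 0 with hj | hj
      · have hi : i ≠ 0 := by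
          intro hi; exact hij (by simp [hi, hj])
        simp [hi]
      · simp [hj]
    | zero => simp
    | add x y _ _ hx hy =>
      simp only [Set.mem_setOf_eq, ContinuousLinearMap.add_apply, inner_add_left] at *
      rw [hx, hy, add_zero]
    | smul c x _ hx =>
      simp only [Set.mem_setOf_eq, ContinuousLinearMap.smul_apply, inner_smul_left] at *
      rw [hx, mul_zero]
  have h0 : (inner ℂ (T (deltaBasis 0)) (deltaBasis 0) : ℂ) = 0 :=
    closure_minimal hspan hC hT
  -- Step 2: `T` is a positive operator.
  have hTpos : T.IsPositive := by
    rw [ContinuousLinearMap.isPositive_iff_complex]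
    intro x
    have h := hpos x
    rw [Complex.le_def] at h
    constructor
    · apply Complex.ext <;> simp [← h.2]
    · simpa using h.1
  have hTnonneg : (0 : ellTwo →L[ℂ] ellTwo) ≤ T :=
    (ContinuousLinearMap.nonneg_iff_isPositive T).mpr hTpos
  -- Step 3: use the square root of `T`.
  set S := @CFC.sqrt (ellTwo →L[ℂ] ellTwo) _ _ _ _ _ _ _ _ IsSelfAdjoint.instNonUnitalContinuousFunctionalCalculus _ T with hSdef
  have hmul : S * S = T := @CFC.sqrt_mul_sqrt_self _ _ _ _ _ _ _ _ _ IsSelfAdjoint.instNonUnitalContinuousFunctionalCalculus _ _ _ T hTnonneg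
  have hSsa : IsSelfAdjoint S := IsSelfAdjoint.of_nonneg (@CFC.sqrt_nonneg _ _ _ _ _ _ _ _ _ IsSelfAdjoint.instNonUnitalContinuousFunctionalCalculus _ T)
  have hadj : ContinuousLinearMap.adjoint S = S := by
    rw [← ContinuousLinearMap.star_eq_adjoint]; exact hSsa
  have hS0 : S (deltaBasis 0) = 0 := by
    have : (inner ℂ (S (deltaBasis 0)) (S (deltaBasis 0)) : ℂ) = 0 := by
      calc (inner ℂ (S (deltaBasis 0)) (S (deltaBasis 0)) : ℂ)
          = inner ℂ (ContinuousLinearMap.adjoint S (S (deltaBasis 0))) (deltaBasis 0) := by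
            rw [ContinuousLinearMap.adjoint_inner_left]
        _ = inner ℂ (T (deltaBasis 0)) (deltaBasis 0) := by
            rw [hadj, ← hmul]; rfl
        _ = 0 := h0
    exact inner_self_eq_zero.mp this
  calc T (deltaBasis 0) = S (S (deltaBasis 0)) := by rw [← hmul]; rfl
    _ = 0 := by rw [hS0, map_zero]
end
end

section
/- Let H = ℓ²(ℕ, ℂ) with standard orthonormal basis (δ_n)_{n∈ℕ}, let e_{ij} ∈ B(H) be the rank-one operator e_{ij}(ξ) = ⟨ξ, δ_j⟩·δ_i, and let E be the norm closure of Span_ℂ{e_{ij} : (i,j) ≠ (0,0)}. Then for every S in the norm closure of Span_ℂ(E_+) one has ‖e_{01} − S‖ ≥ 1; consequently the distance from e_{01} ∈ E to the norm closure of Span_ℂ(E_+) equals 1, and in particular E is not approximately generated by positives. -/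
/-!
Statement 6: With `E` the closed span of the matrix units `{e_{ij} : (i,j) ≠ (0,0)}`
in `B(ℓ²(ℕ))`: every `S` in the closed span of `E₊` satisfies `‖e₀₁ − S‖ ≥ 1`;
consequently `dist(e₀₁, closure(span E₊)) = 1` and `E` is not approximately
generated by positives.
-/

open scoped ComplexOrder

noncomputable section

/-- The operator system `E`: the norm closure of the span of the matrix units
`e_{ij}` with `(i,j) ≠ (0,0)`. -/
def Eset : Set (ellTwo →L[ℂ] ellTwo) :=
  closure (↑(Submodule.span ℂ
    {S : ellTwo →L[ℂ] ellTwo | ∃ i j : ℕ, (i, j) ≠ (0, 0) ∧ S = matrixUnit i j}) :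
      Set (ellTwo →L[ℂ] ellTwo))

/-- The positive cone `E₊` of `E`. -/
def Epos : Set (ellTwo →L[ℂ] ellTwo) :=
  {T | T ∈ Eset ∧ ∀ v : ellTwo, 0 ≤ (inner ℂ (T v) v : ℂ)}



lemma inner_delta_left (n : ℕ) (x : ellTwo) : (inner ℂ (deltaBasis n) x : ℂ) = x n := by
  rw [deltaBasis, lp.inner_single_left]
  simp [RCLike.inner_apply]

lemma delta_apply (n m : ℕ) : (deltaBasis n) m = if m = n then (1:ℂ) else 0 := by
  rw [deltaBasis, lp.single_apply]
  split_ifs with h <;> simp [h]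

lemma norm_delta (n : ℕ) : ‖deltaBasis n‖ = 1 := by
  have := lp.norm_single (p := 2) (E := fun _ : ℕ => ℂ) (by norm_num) n (1:ℂ)
  simpa [deltaBasis] using this

lemma matrixUnit_apply (i j : ℕ) (v : ellTwo) :
    matrixUnit i j v = (inner ℂ (deltaBasis j) v : ℂ) • deltaBasis i := rfl

def entryCLM (m n : ℕ) : (ellTwo →L[ℂ] ellTwo) →L[ℂ] ℂ :=
  ((innerSL ℂ) (deltaBasis m)).comp (ContinuousLinearMap.apply ℂ ellTwo (deltaBasis n))

lemma entryCLM_apply (m n : ℕ) (T : ellTwo →L[ℂ] ellTwo) :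
    entryCLM m n T = (inner ℂ (deltaBasis m) (T (deltaBasis n)) : ℂ) := rfl

lemma closure_span_vanish {s : Set (ellTwo →L[ℂ] ellTwo)} (φ : (ellTwo →L[ℂ] ellTwo) →L[ℂ] ℂ)
    (h : ∀ x ∈ s, φ x = 0) {T : ellTwo →L[ℂ] ellTwo}
    (hT : T ∈ closure (↑(Submodule.span ℂ s) : Set (ellTwo →L[ℂ] ellTwo))) : φ T = 0 := by
  have hsub : (↑(Submodule.span ℂ s) : Set (ellTwo →L[ℂ] ellTwo)) ⊆
      (LinearMap.ker (φ : (ellTwo →L[ℂ] ellTwo) →ₗ[ℂ] ℂ) : Submodule ℂ (ellTwo →L[ℂ] ellTwo)) := by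
    intro x hx
    exact Submodule.span_le.2 (fun y hy => LinearMap.mem_ker.2 (h y hy)) hx
  exact LinearMap.mem_ker.1
    (closure_minimal hsub (ContinuousLinearMap.isClosed_ker φ) hT)

lemma Eset_entry00 {T : ellTwo →L[ℂ] ellTwo} (hT : T ∈ Eset) :
    (inner ℂ (deltaBasis 0) (T (deltaBasis 0)) : ℂ) = 0 := by
  refine closure_span_vanish (entryCLM 0 0) ?_ hT
  rintro x ⟨i, j, hij, rfl⟩
  rw [entryCLM_apply, matrixUnit_apply, inner_smul_right, inner_delta_left,
    inner_delta_left, delta_apply, delta_apply]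
  split_ifs with h1 h2
  · exact absurd (by rw [h1, ← h2] : (i, j) = (0, 0)) hij
  · simp
  · simp
  · simp

lemma quad_zero {z w : ℂ} (hw : 0 ≤ w) (h : ∀ t : ℝ, 0 ≤ (t : ℂ) * z + (t : ℂ)^2 * w) :
    z = 0 := by
  have him : ∀ t : ℝ, t * z.im + t^2 * w.im = 0 := by
    intro t
    have := (Complex.le_def.1 (h t)).2
    simp [← Complex.ofReal_pow, Complex.add_im, Complex.mul_im] at this
    linarith
  have hre : ∀ t : ℝ, 0 ≤ t * z.re + t^2 * w.re := by
    intro t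
    have := (Complex.le_def.1 (h t)).1
    simp [← Complex.ofReal_pow, Complex.add_re, Complex.mul_re] at this
    linarith
  have hwre : 0 ≤ w.re := (Complex.le_def.1 hw).1
  have h1 := him 1
  have h2 := him (-1)
  have hzim : z.im = 0 := by linarith
  have hzre : z.re = 0 := by
    by_contra hne
    have hc : (0:ℝ) < 1 + w.re := by linarith
    have ht := hre (-z.re / (1 + w.re))
    have h3 : -z.re / (1 + w.re) * z.re + (-z.re / (1 + w.re))^2 * w.re
        = z.re^2 / (1 + w.re)^2 * (w.re - (1 + w.re)) := by
      field_simp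
      ring
    rw [h3] at ht
    have h4 : w.re - (1 + w.re) = -1 := by ring
    rw [h4] at ht
    have h5 : 0 < z.re^2 / (1 + w.re)^2 := by positivity
    nlinarith
  exact Complex.ext hzre hzim

lemma Epos_entry01 {T : ellTwo →L[ℂ] ellTwo} (hT : T ∈ Epos) :
    (inner ℂ (deltaBasis 0) (T (deltaBasis 1)) : ℂ) = 0 := by
  obtain ⟨hTE, hTpos⟩ := hT
  have h00 : (inner ℂ (T (deltaBasis 0)) (deltaBasis 0) : ℂ) = 0 := by
    have := Eset_entry00 hTE
    rw [← inner_conj_symm, this, map_zero]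
  set a : ℂ := inner ℂ (T (deltaBasis 0)) (deltaBasis 1) with ha
  set b : ℂ := inner ℂ (T (deltaBasis 1)) (deltaBasis 0) with hb
  set d : ℂ := inner ℂ (T (deltaBasis 1)) (deltaBasis 1) with hd
  have hdpos : 0 ≤ d := hTpos (deltaBasis 1)
  have hexp : ∀ c : ℂ, (inner ℂ (T (deltaBasis 0 + c • deltaBasis 1))
      (deltaBasis 0 + c • deltaBasis 1) : ℂ)
      = c * a + (starRingEnd ℂ) c * b + (starRingEnd ℂ) c * c * d := by
    intro c
    rw [map_add, map_smul, inner_add_left, inner_add_right, inner_add_right,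
      inner_smul_left, inner_smul_left, inner_smul_right, inner_smul_right, h00]
    ring
  have hab : a + b = 0 := by
    apply quad_zero hdpos
    intro t
    have h0 := hTpos (deltaBasis 0 + (t : ℂ) • deltaBasis 1)
    rw [hexp] at h0
    have hc : (starRingEnd ℂ) (t : ℂ) = (t : ℂ) := Complex.conj_ofReal t
    rw [hc] at h0
    have key : (t:ℂ) * (a + b) + (t:ℂ)^2 * d
        = (t:ℂ) * a + (t:ℂ) * b + (t:ℂ) * (t:ℂ) * d := by ring
    rw [key]
    exact h0
  have hab' : Complex.I * (a - b) = 0 := by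
    apply quad_zero hdpos
    intro t
    have h0 := hTpos (deltaBasis 0 + ((t : ℂ) * Complex.I) • deltaBasis 1)
    rw [hexp] at h0
    have hc : (starRingEnd ℂ) ((t : ℂ) * Complex.I) = (t : ℂ) * (-Complex.I) := by
      rw [map_mul, Complex.conj_ofReal, Complex.conj_I]
    rw [hc] at h0
    have key : (t:ℂ) * (Complex.I * (a - b)) + (t:ℂ)^2 * d
        = ((t:ℂ) * Complex.I) * a + ((t:ℂ) * (-Complex.I)) * b
          + ((t:ℂ) * (-Complex.I)) * ((t:ℂ) * Complex.I) * d := by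
      linear_combination ((t:ℂ)^2 * d) * Complex.I_sq
    rw [key]
    exact h0
  have hab2 : a = b := by
    rcases mul_eq_zero.1 hab' with h | h
    · exact absurd h Complex.I_ne_zero
    · linear_combination h
  have hb0 : b = 0 := by linear_combination hab / 2 - hab2 / 2
  rw [← inner_conj_symm, ← hb, hb0, map_zero]


lemma one_le_dist {S : ellTwo →L[ℂ] ellTwo}
    (hS : S ∈ closure (↑(Submodule.span ℂ Epos) : Set (ellTwo →L[ℂ] ellTwo))) :
    1 ≤ ‖matrixUnit 0 1 - S‖ := by
  have hS0 : (inner ℂ (deltaBasis 0) (S (deltaBasis 1)) : ℂ) = 0 :=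
    closure_span_vanish (entryCLM 0 1) (fun x hx => Epos_entry01 hx) hS
  have he : (inner ℂ (deltaBasis 0) (matrixUnit 0 1 (deltaBasis 1)) : ℂ) = 1 := by
    rw [matrixUnit_apply, inner_smul_right, inner_delta_left, inner_delta_left,
      delta_apply, delta_apply]
    simp
  have hval : (inner ℂ (deltaBasis 0) ((matrixUnit 0 1 - S) (deltaBasis 1)) : ℂ) = 1 := by
    rw [ContinuousLinearMap.sub_apply, inner_sub_right, hS0, sub_zero, he]
  calc (1:ℝ) = ‖(inner ℂ (deltaBasis 0) ((matrixUnit 0 1 - S) (deltaBasis 1)) : ℂ)‖ := by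
        rw [hval]; simp
    _ ≤ ‖deltaBasis 0‖ * ‖(matrixUnit 0 1 - S) (deltaBasis 1)‖ := norm_inner_le_norm _ _
    _ = ‖(matrixUnit 0 1 - S) (deltaBasis 1)‖ := by rw [norm_delta, one_mul]
    _ ≤ ‖matrixUnit 0 1 - S‖ * ‖deltaBasis 1‖ := ContinuousLinearMap.le_opNorm _ _
    _ = ‖matrixUnit 0 1 - S‖ := by rw [norm_delta, mul_one]

lemma norm_matrixUnit_le : ‖matrixUnit 0 1‖ ≤ 1 := by
  apply ContinuousLinearMap.opNorm_le_bound _ zero_le_one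
  intro v
  rw [matrixUnit_apply, norm_smul, norm_delta, mul_one, one_mul]
  calc ‖(inner ℂ (deltaBasis 1) v : ℂ)‖ ≤ ‖deltaBasis 1‖ * ‖v‖ := norm_inner_le_norm _ _
    _ = ‖v‖ := by rw [norm_delta, one_mul]

theorem stmt6 :
    (∀ S ∈ closure (↑(Submodule.span ℂ Epos) : Set (ellTwo →L[ℂ] ellTwo)),
      1 ≤ ‖matrixUnit 0 1 - S‖) ∧
    Metric.infDist (matrixUnit 0 1)
      (closure (↑(Submodule.span ℂ Epos) : Set (ellTwo →L[ℂ] ellTwo))) = 1 ∧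
    closure (↑(Submodule.span ℂ Epos) : Set (ellTwo →L[ℂ] ellTwo)) ≠ Eset := by
  have h0mem : (0 : ellTwo →L[ℂ] ellTwo) ∈
      closure (↑(Submodule.span ℂ Epos) : Set (ellTwo →L[ℂ] ellTwo)) :=
    subset_closure (Submodule.zero_mem _)
  refine ⟨fun S hS => one_le_dist hS, ?_, ?_⟩
  · apply le_antisymm
    · refine le_trans (Metric.infDist_le_dist_of_mem h0mem) ?_
      rw [dist_eq_norm, sub_zero]
      exact norm_matrixUnit_le
    · by_contra hlt
      push_neg at hlt
      obtain ⟨y, hy, hdy⟩ := (Metric.infDist_lt_iff ⟨0, h0mem⟩).1 hlt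
      rw [dist_eq_norm] at hdy
      exact absurd (one_le_dist hy) (not_le.2 hdy)
  · intro heq
    have he : matrixUnit 0 1 ∈ Eset :=
      subset_closure (Submodule.subset_span ⟨0, 1, by simp, rfl⟩)
    rw [← heq] at he
    have h1 := one_le_dist he
    rw [sub_self, norm_zero] at h1
    linarith
end
end
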